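/- arXiv:1304.6704 — 2 statements merged into one kernel-verified Lean document; each statement's English description precedes it below -/
import Mathlib

section
/- For d ≥ 2 and n ≥ 1, let L(d,n) be the directed graph on vertex set {0,1,…,n} with d−1 self-loops at 0 and at n, d−2 self-loops at each interior vertex, a directed edge from k to k−1 for every k ≠ 0, and a directed edge from k to k+1 for every k ≠ n. Then the maximum over pairs (x,y) of the expected hitting time E_x[τ_y] of the simple random walk on L(d,n) equals (d/2)·n·(n+1), achieved at x = 0, y = n. -/
open scoped ENNReal Classical

/-- Finite-horizon iterates whose supremum is the expected hitting time of `S`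
for the Markov chain with transition kernel `P`. -/
noncomputable def hitIter {V : Type*} (P : V → V → ℝ≥0∞) (S : Set V) : ℕ → V → ℝ≥0∞
  | 0 => fun _ => 0
  | (m + 1) => fun x => if x ∈ S then 0 else 1 + ∑' z, P x z * hitIter P S m z

/-- Expected hitting time `E_x[τ_S]` of the set `S`, started from `x`, defined as the
minimal nonnegative solution of the hitting-time equations (supremum of iterates). -/
noncomputable def hitExp {V : Type*} (P : V → V → ℝ≥0∞) (S : Set V) (x : V) : ℝ≥0∞ :=
  ⨆ m, hitIter P S m x

/-- Outdegree of `x` in a directed multigraph given by edge multiplicities `E`. -/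
def outdeg {V : Type*} [Fintype V] (E : V → V → ℕ) (x : V) : ℕ := ∑ y, E x y

/-- Indegree of `x`. -/
def indeg {V : Type*} [Fintype V] (E : V → V → ℕ) (x : V) : ℕ := ∑ y, E y x

/-- Transition kernel of the simple random walk on the multigraph `E`. -/
noncomputable def stepP {V : Type*} [Fintype V] (E : V → V → ℕ) (x y : V) : ℝ≥0∞ :=
  (E x y : ℝ≥0∞) / (outdeg E x : ℝ≥0∞)

/-- Expected return time `E_i[τ_i⁺]` of the simple random walk on `E`. -/
noncomputable def retExp {V : Type*} [Fintype V] (E : V → V → ℕ) (i : V) : ℝ≥0∞ :=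
  1 + ∑' z, stepP E i z * hitExp (stepP E) {i} z


/-- Edge multiplicities of the graph `L(d,n)` on `{0,…,n}`: `d−1` self-loops at `0`
and `n`, `d−2` self-loops at interior vertices, an edge from `k` to `k−1` for `k ≠ 0`
and an edge from `k` to `k+1` for `k ≠ n`. -/
def Ldn (d n : ℕ) (k l : Fin (n + 1)) : ℕ :=
  (if l = k then (if k.val = 0 ∨ k.val = n then d - 1 else d - 2) else 0)
  + (if k.val ≠ 0 ∧ l.val + 1 = k.val then 1 else 0)
  + (if k.val ≠ n ∧ l.val = k.val + 1 then 1 else 0)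

/-! ### generic lemmas -/
section generic
variable {V : Type*} (P : V → V → ℝ≥0∞) (S : Set V)

lemma hitIter_mono (m : ℕ) : ∀ x, hitIter P S m x ≤ hitIter P S (m+1) x := by
  induction m with
  | zero => intro x; simp [hitIter]
  | succ m ih =>
    intro x
    simp only [hitIter]
    split
    · exact le_rfl
    · gcongr with z
      exact ih z

lemma hitIter_monotone (x : V) : Monotone fun m => hitIter P S m x :=
  monotone_nat_of_le_succ fun m => hitIter_mono P S m x

lemma hitExp_mem {y : V} (hy : y ∈ S) : hitExp P S y = 0 := by
  simp only [hitExp, ENNReal.iSup_eq_zero]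
  intro m
  cases m <;> simp [hitIter, hy]

lemma hitExp_fix [Fintype V] {x : V} (hx : x ∉ S) :
    hitExp P S x = 1 + ∑' z, P x z * hitExp P S z := by
  have h1 : hitExp P S x = ⨆ m, hitIter P S (m+1) x := by
    refine le_antisymm (iSup_le fun m => ?_) (iSup_le fun m => le_iSup (fun m => hitIter P S m x) (m+1))
    exact (hitIter_monotone P S x (Nat.le_succ m)).trans (le_iSup (fun m => hitIter P S (m+1) x) m)
  rw [h1]
  simp only [hitIter, if_neg hx]
  rw [← ENNReal.add_iSup]
  congr 1
  simp only [tsum_fintype, hitExp]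
  rw [← ENNReal.finsetSum_iSup_of_monotone]
  · exact Finset.sum_congr rfl fun z _ => (ENNReal.mul_iSup _ _).symm
  · exact fun z => fun a b hab => mul_le_mul_right (hitIter_monotone P S z hab) _

end generic

/-! ### the explicit formula -/

def Fv (d n y x : ℕ) : ℕ :=
  if x ≤ y then d * ∑ k ∈ Finset.Ico x y, (k+1) else d * ∑ k ∈ Finset.Ico y x, (n - k)

lemma Fv_self (d n y : ℕ) : Fv d n y y = 0 := by simp [Fv]

lemma Fv_lt {d n y x : ℕ} (h : x < y) : Fv d n y x = d * (x+1) + Fv d n y (x+1) := by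
  rw [Fv, Fv, if_pos h.le, if_pos (by omega : x + 1 ≤ y), Finset.sum_eq_sum_Ico_succ_bot h, mul_add]

lemma Fv_gt {d n y x : ℕ} (h : y ≤ x) : Fv d n y (x+1) = d * (n - x) + Fv d n y x := by
  rcases eq_or_lt_of_le h with rfl | h'
  · simp [Fv, Nat.lt_irrefl, Finset.sum_Ico_succ_top h, Nat.lt_succ_iff]
  · rw [Fv, Fv, if_neg (by omega), if_neg (by omega), Finset.sum_Ico_succ_top h, mul_add]
    ring

lemma Fv_eq0 {d n y : ℕ} (hd : 2 ≤ d) (h0 : 0 < y) :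
    d + ((d-1) * Fv d n y 0 + Fv d n y 1) = d * Fv d n y 0 := by
  obtain ⟨e, rfl⟩ : ∃ e, d = e + 2 := ⟨d - 2, by omega⟩
  rw [show Fv (e+2) n y 0 = (e+2) * (0+1) + Fv (e+2) n y 1 from Fv_lt h0]
  simp only [show e + 2 - 1 = e + 1 from rfl]
  ring

lemma Fv_eqn {d n y : ℕ} (hd : 2 ≤ d) (hn : 1 ≤ n) (h : y < n) :
    d + ((d-1) * Fv d n y n + Fv d n y (n-1)) = d * Fv d n y n := by
  obtain ⟨e, rfl⟩ : ∃ e, d = e + 2 := ⟨d - 2, by omega⟩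
  obtain ⟨m, rfl⟩ : ∃ m, n = m + 1 := ⟨n - 1, by omega⟩
  have := Fv_gt (d := e+2) (n := m+1) (y := y) (x := m) (by omega)
  rw [show m + 1 - m = 1 by omega] at this
  rw [show m + 1 - 1 = m from rfl, this]
  simp only [show e + 2 - 1 = e + 1 from rfl]
  ring

lemma Fv_eqi {d n y x : ℕ} (hd : 2 ≤ d) (h0 : 0 < x) (hxn : x < n) (hxy : x ≠ y) :
    d + ((d-2) * Fv d n y x + Fv d n y (x-1) + Fv d n y (x+1)) = d * Fv d n y x := by
  obtain ⟨e, rfl⟩ : ∃ e, d = e + 2 := ⟨d - 2, by omega⟩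
  obtain ⟨x', rfl⟩ : ∃ x', x = x' + 1 := ⟨x - 1, by omega⟩
  simp only [show e + 2 - 2 = e from rfl, show x' + 1 - 1 = x' from rfl]
  rcases lt_or_gt_of_ne hxy with hlt | hgt
  · rw [show Fv (e+2) n y x' = (e+2) * (x'+1) + Fv (e+2) n y (x'+1) from Fv_lt (by omega),
      show Fv (e+2) n y (x'+1) = (e+2) * (x'+1+1) + Fv (e+2) n y (x'+1+1) from Fv_lt (by omega)]
    ring
  · have h1 : Fv (e+2) n y (x'+1) = (e+2) * (n - x') + Fv (e+2) n y x' := Fv_gt (by omega)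
    have h2 : Fv (e+2) n y (x'+1+1) = (e+2) * (n - (x'+1)) + Fv (e+2) n y (x'+1) := Fv_gt (by omega)
    obtain ⟨a, ha⟩ : ∃ a, n - (x'+1) = a := ⟨_, rfl⟩
    have ha' : n - x' = a + 1 := by omega
    rw [h2, h1, ha, ha']
    ring

/-! ### graph sums -/
section graph
variable {d n : ℕ}

lemma left_key {x : Fin (n+1)} (h0 : ¬ x.val = 0) (z : Fin (n+1)) :
    ((x.val ≠ 0 ∧ z.val + 1 = x.val) ↔ z = ⟨x.val - 1, by have := x.isLt; omega⟩) := by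
  constructor
  · rintro ⟨-, hz⟩; exact Fin.ext (by simp; omega)
  · rintro rfl; exact ⟨h0, by simp; omega⟩

lemma right_key {x : Fin (n+1)} (hnn : ¬ x.val = n) (z : Fin (n+1)) :
    ((x.val ≠ n ∧ z.val = x.val + 1) ↔ z = ⟨x.val + 1, by have := x.isLt; omega⟩) := by
  constructor
  · rintro ⟨-, hz⟩; exact Fin.ext (by simp; omega)
  · rintro rfl; exact ⟨hnn, by simp⟩

lemma Esum_eq (x : Fin (n+1)) (g : Fin (n+1) → ℝ≥0∞) :
    ∑ z, (Ldn d n x z : ℝ≥0∞) * g z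
      = (((if x.val = 0 ∨ x.val = n then d-1 else d-2) : ℕ) : ℝ≥0∞) * g x
        + (if h : x.val = 0 then 0 else g ⟨x.val - 1, by have := x.isLt; omega⟩)
        + (if h : x.val = n then 0 else g ⟨x.val + 1, by have := x.isLt; omega⟩) := by
  have expand : ∀ z : Fin (n+1), (Ldn d n x z : ℝ≥0∞) * g z =
      (if z = x then (((if x.val = 0 ∨ x.val = n then d-1 else d-2) : ℕ) : ℝ≥0∞) * g z else 0)
      + ((if x.val ≠ 0 ∧ z.val + 1 = x.val then g z else 0)
      + (if x.val ≠ n ∧ z.val = x.val + 1 then g z else 0)) := by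
    intro z
    simp only [Ldn, Nat.cast_add]
    rw [add_mul, add_mul, add_assoc]
    congr 1
    · split <;> simp
    · congr 1 <;> (split <;> simp)
  rw [Finset.sum_congr rfl fun z _ => expand z, Finset.sum_add_distrib, Finset.sum_add_distrib,
    add_assoc]
  congr 1
  · simp
  congr 1
  · by_cases h0 : x.val = 0
    · simp [h0]
    · rw [dif_neg h0]
      simp only [left_key h0]
      simp
  · by_cases hnn : x.val = n
    · simp [hnn]
    · rw [dif_neg hnn]
      simp only [right_key hnn]
      simp

lemma outdeg_Ldn (hd : 2 ≤ d) (hn : 1 ≤ n) (x : Fin (n+1)) : outdeg (Ldn d n) x = d := by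
  have h : (outdeg (Ldn d n) x : ℝ≥0∞) = ((d : ℕ) : ℝ≥0∞) := by
    have : (outdeg (Ldn d n) x : ℝ≥0∞) = ∑ z, (Ldn d n x z : ℝ≥0∞) * (fun _ => 1) z := by
      simp [outdeg]
    rw [this, Esum_eq x (fun _ => 1)]
    by_cases h0 : x.val = 0 <;> by_cases hnn : x.val = n
    · omega
    · rw [dif_pos h0, dif_neg hnn]
      simp only [if_pos (Or.inl h0), mul_one, add_zero, zero_add]
      have : d - 1 + 1 = d := by omega
      exact_mod_cast this
    · rw [dif_neg h0, dif_pos hnn]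
      simp only [if_pos (Or.inr hnn), mul_one, add_zero]
      have : d - 1 + 1 = d := by omega
      exact_mod_cast this
    · rw [dif_neg h0, dif_neg hnn]
      simp only [if_neg (by tauto : ¬(x.val = 0 ∨ x.val = n)), mul_one]
      have : d - 2 + 1 + 1 = d := by omega
      exact_mod_cast this
  exact_mod_cast h

lemma stepP_Ldn (hd : 2 ≤ d) (hn : 1 ≤ n) (x z : Fin (n+1)) :
    stepP (Ldn d n) x z = (Ldn d n x z : ℝ≥0∞) / d := by
  rw [stepP, outdeg_Ldn hd hn]

end graph

/-! ### fixed point and value identification -/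

/-- the hitting time, as a function of the target `y ≤ n`. -/
noncomputable def uH (d n y : ℕ) (hy : y ≤ n) : Fin (n+1) → ℝ≥0∞ :=
  hitExp (stepP (Ldn d n)) {⟨y, by omega⟩}

noncomputable def gF (d n y : ℕ) (z : Fin (n+1)) : ℝ≥0∞ := ((Fv d n y z.val : ℕ) : ℝ≥0∞)

section value
variable {d n y : ℕ} (hd : 2 ≤ d) (hn : 1 ≤ n) (hy : y ≤ n)

lemma dne0 (hd : 2 ≤ d) : ((d : ℕ) : ℝ≥0∞) ≠ 0 := by
  exact_mod_cast Nat.cast_ne_zero.mpr (by omega : d ≠ 0)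

lemma dnet : ((d : ℕ) : ℝ≥0∞) ≠ ⊤ := ENNReal.natCast_ne_top d

include hd hn hy in
lemma key (x : Fin (n+1)) (hxy : x.val ≠ y) :
    (d:ℝ≥0∞) + ∑ z, (Ldn d n x z : ℝ≥0∞) * gF d n y z = d * gF d n y x := by
  rw [Esum_eq x (gF d n y)]
  by_cases h0 : x.val = 0 <;> by_cases hnn : x.val = n
  · omega
  · rw [dif_pos h0, dif_neg hnn, if_pos (Or.inl h0)]
    simp only [add_zero, gF, h0]
    exact_mod_cast Fv_eq0 (n := n) (y := y) hd (by omega)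
  · rw [dif_neg h0, dif_pos hnn, if_pos (Or.inr hnn)]
    simp only [add_zero, gF, hnn]
    exact_mod_cast Fv_eqn (y := y) hd hn (by omega)
  · rw [dif_neg h0, dif_neg hnn, if_neg (by tauto : ¬(x.val = 0 ∨ x.val = n))]
    simp only [gF]
    exact_mod_cast Fv_eqi (n := n) (y := y) hd (by omega) (by omega) hxy

include hd hn hy in
lemma gfix (x : Fin (n+1)) (hxy : x.val ≠ y) :
    1 + ∑' z, stepP (Ldn d n) x z * gF d n y z = gF d n y x := by
  rw [tsum_fintype]
  have h1 : ∀ z, stepP (Ldn d n) x z * gF d n y z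
      = (Ldn d n x z : ℝ≥0∞) * gF d n y z * ((d:ℕ):ℝ≥0∞)⁻¹ := by
    intro z; rw [stepP_Ldn hd hn, div_eq_mul_inv]; ring
  rw [Finset.sum_congr rfl fun z _ => h1 z, ← Finset.sum_mul, ← div_eq_mul_inv]
  have hk := key hd hn hy x hxy
  calc 1 + (∑ z, (Ldn d n x z : ℝ≥0∞) * gF d n y z) / ((d:ℕ):ℝ≥0∞)
      = (((d:ℕ):ℝ≥0∞) + ∑ z, (Ldn d n x z : ℝ≥0∞) * gF d n y z) / ((d:ℕ):ℝ≥0∞) := by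
        rw [ENNReal.add_div, ENNReal.div_self (dne0 hd) dnet]
    _ = (((d:ℕ):ℝ≥0∞) * gF d n y x) / ((d:ℕ):ℝ≥0∞) := by rw [hk]
    _ = gF d n y x := by rw [mul_div_assoc, ENNReal.mul_div_cancel (dne0 hd) dnet]

include hd hn in
lemma uH_le (x : Fin (n+1)) : uH d n y hy x ≤ gF d n y x := by
  have H : ∀ m x, hitIter (stepP (Ldn d n)) {(⟨y, by omega⟩ : Fin (n+1))} m x ≤ gF d n y x := by
    intro m
    induction m with
    | zero => intro x; simp [hitIter]
    | succ m ih =>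
      intro x
      simp only [hitIter]
      split
      · exact zero_le
      · rename_i hxS
        have hxy : x.val ≠ y := fun h => hxS (by simp [Set.mem_singleton_iff, Fin.ext_iff, h])
        calc 1 + ∑' z, stepP (Ldn d n) x z * hitIter (stepP (Ldn d n)) _ m z
            ≤ 1 + ∑' z, stepP (Ldn d n) x z * gF d n y z := by
              gcongr with z; exact ih z
          _ = gF d n y x := gfix hd hn hy x hxy
  exact iSup_le fun m => H m x

include hd hn in
lemma uH_fin (x : Fin (n+1)) : uH d n y hy x ≠ ⊤ :=
  ne_top_of_le_ne_top (ENNReal.natCast_ne_top _) (uH_le hd hn hy x)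

include hd hn in
lemma ufix (x : Fin (n+1)) (hxy : x.val ≠ y) :
    (d:ℝ≥0∞) * uH d n y hy x = d + ∑ z, (Ldn d n x z : ℝ≥0∞) * uH d n y hy z := by
  have hx : x ∉ ({(⟨y, by omega⟩ : Fin (n+1))} : Set (Fin (n+1))) := by
    simp [Set.mem_singleton_iff, Fin.ext_iff]; exact hxy
  rw [show uH d n y hy = hitExp (stepP (Ldn d n)) {⟨y, by omega⟩} from rfl,
    hitExp_fix _ _ hx, mul_add, mul_one, tsum_fintype, Finset.mul_sum]
  congr 1
  refine Finset.sum_congr rfl fun z _ => ?_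
  rw [stepP_Ldn hd hn, div_eq_mul_inv,
    show ((d:ℕ):ℝ≥0∞) * ((Ldn d n x z : ℝ≥0∞) * ((d:ℕ):ℝ≥0∞)⁻¹ * hitExp (stepP (Ldn d n)) {(⟨y, by omega⟩ : Fin (n+1))} z)
      = (((d:ℕ):ℝ≥0∞) * ((d:ℕ):ℝ≥0∞)⁻¹) * ((Ldn d n x z : ℝ≥0∞) * hitExp (stepP (Ldn d n)) {(⟨y, by omega⟩ : Fin (n+1))} z) from by ring,
    ENNReal.mul_inv_cancel (dne0 hd) dnet, one_mul]

end value

/-! ### node equations for the hitting time -/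

noncomputable def uN (d n y : ℕ) (hy : y ≤ n) (k : ℕ) : ℝ≥0∞ :=
  if h : k ≤ n then uH d n y hy ⟨k, by omega⟩ else 0

lemma cancel {a b c : ℝ≥0∞} (ha : a ≠ ⊤) (h : a + b = a + c) : b = c :=
  (ENNReal.add_right_inj ha).mp h

section nodes
variable {d n y : ℕ} (hd : 2 ≤ d) (hn : 1 ≤ n) (hy : y ≤ n)

include hd hn hy in
lemma uN_fin (k : ℕ) : uN d n y hy k ≠ ⊤ := by
  rw [uN]
  split
  · exact uH_fin hd hn hy _
  · simp

lemma uN_y : uN d n y hy y = 0 := by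
  rw [uN, dif_pos hy]
  exact hitExp_mem _ _ rfl

include hd hn hy in
lemma node0 (hy0 : 0 < y) :
    (d:ℝ≥0∞) * uN d n y hy 0
      = d + (((d-1 : ℕ):ℝ≥0∞) * uN d n y hy 0 + uN d n y hy 1) := by
  rw [uN, uN, dif_pos (show (0:ℕ) ≤ n by omega), dif_pos (show (1:ℕ) ≤ n by omega)]
  have h := ufix hd hn hy ⟨0, by omega⟩ (show (0:ℕ) ≠ y by omega)
  rw [Esum_eq] at h
  rw [dif_pos (show ((⟨0, by omega⟩ : Fin (n+1)) : ℕ) = 0 from rfl),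
    dif_neg (show ¬((⟨0, by omega⟩ : Fin (n+1)) : ℕ) = n by simp; omega),
    if_pos (Or.inl (show ((⟨0, by omega⟩ : Fin (n+1)) : ℕ) = 0 from rfl)), add_zero] at h
  exact h

include hd hn hy in
lemma noden (hyn : y < n) :
    (d:ℝ≥0∞) * uN d n y hy n
      = d + (((d-1 : ℕ):ℝ≥0∞) * uN d n y hy n + uN d n y hy (n-1)) := by
  rw [uN, uN, dif_pos (le_refl n), dif_pos (show n - 1 ≤ n by omega)]
  have h := ufix hd hn hy ⟨n, by omega⟩ (show n ≠ y by omega)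
  rw [Esum_eq] at h
  rw [dif_neg (show ¬((⟨n, by omega⟩ : Fin (n+1)) : ℕ) = 0 by simp; omega),
    dif_pos (show ((⟨n, by omega⟩ : Fin (n+1)) : ℕ) = n from rfl),
    if_pos (Or.inr (show ((⟨n, by omega⟩ : Fin (n+1)) : ℕ) = n from rfl)), add_zero] at h
  exact h

include hd hn hy in
lemma nodei (x : ℕ) (h0 : 0 < x) (hxn : x < n) (hxy : x ≠ y) :
    (d:ℝ≥0∞) * uN d n y hy x
      = d + (((d-2 : ℕ):ℝ≥0∞) * uN d n y hy x + uN d n y hy (x-1) + uN d n y hy (x+1)) := by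
  rw [uN, uN, uN, dif_pos (show x ≤ n by omega), dif_pos (show x - 1 ≤ n by omega),
    dif_pos (show x + 1 ≤ n by omega)]
  have h := ufix hd hn hy ⟨x, by omega⟩ (show x ≠ y from hxy)
  rw [Esum_eq] at h
  rw [dif_neg (show ¬((⟨x, by omega⟩ : Fin (n+1)) : ℕ) = 0 by simp; omega),
    dif_neg (show ¬((⟨x, by omega⟩ : Fin (n+1)) : ℕ) = n by simp; omega),
    if_neg (show ¬(((⟨x, by omega⟩ : Fin (n+1)) : ℕ) = 0 ∨ ((⟨x, by omega⟩ : Fin (n+1)) : ℕ) = n)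
      by simp; omega)] at h
  exact h

end nodes

/-! ### telescoping -/

lemma rearr (A B C : ℝ≥0∞) : B + (A + C) = A + (B + C) := by ring

section tele
variable {d n y : ℕ} (hd : 2 ≤ d) (hn : 1 ≤ n) (hy : y ≤ n)

lemma nat_id0 (hd : 2 ≤ d) : d * (0 + 1) = (d - 1) + 1 := by omega

lemma nat_id1 (hd : 2 ≤ d) (m : ℕ) : d * (m+1+1) = ((d-2) + 1 + 1) + d * (m+1) := by
  obtain ⟨e, rfl⟩ : ∃ e, d = e + 2 := ⟨d - 2, by omega⟩
  simp only [show e + 2 - 2 = e from rfl]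
  ring

include hd hn hy in
lemma tele_left : ∀ x : ℕ, x < y →
    uN d n y hy x = ((d * (x+1) : ℕ) : ℝ≥0∞) + uN d n y hy (x+1) := by
  intro x
  induction x with
  | zero =>
    intro hx
    have h := node0 hd hn hy (by omega)
    have hc : ((d:ℕ):ℝ≥0∞) = ((d-1 : ℕ):ℝ≥0∞) + 1 := by
      exact_mod_cast (show d = d - 1 + 1 by omega)
    rw [hc, add_mul, one_mul, rearr] at h
    have h2 := cancel (ENNReal.mul_ne_top (ENNReal.natCast_ne_top _) (uN_fin hd hn hy 0)) h
    rw [show ((d * (0+1) : ℕ) : ℝ≥0∞) = ((d-1:ℕ):ℝ≥0∞) + 1 from by exact_mod_cast nat_id0 hd]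
    exact h2
  | succ x ih =>
    intro hx
    have h := nodei hd hn hy (x+1) (by omega) (by omega) (by omega)
    rw [show x + 1 - 1 = x from rfl, ih (by omega)] at h
    have hc : ((d:ℕ):ℝ≥0∞) = ((d-2 : ℕ):ℝ≥0∞) + 1 + 1 := by
      exact_mod_cast (show d = d - 2 + 1 + 1 by omega)
    rw [hc, add_mul, add_mul, one_mul] at h
    rw [show (((d-2:ℕ):ℝ≥0∞) + 1 + 1)
          + (((d-2:ℕ):ℝ≥0∞) * uN d n y hy (x+1) + (((d * (x+1) : ℕ):ℝ≥0∞) + uN d n y hy (x+1))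
            + uN d n y hy (x+1+1))
        = (((d-2:ℕ):ℝ≥0∞) * uN d n y hy (x+1) + uN d n y hy (x+1))
          + (((((d-2:ℕ):ℝ≥0∞) + 1 + 1) + ((d * (x+1) : ℕ):ℝ≥0∞)) + uN d n y hy (x+1+1))
        from by ring] at h
    have h2 := cancel (ENNReal.add_ne_top.mpr
      ⟨ENNReal.mul_ne_top (ENNReal.natCast_ne_top _) (uN_fin hd hn hy (x+1)),
        uN_fin hd hn hy (x+1)⟩) h
    rw [show ((d * (x+1+1) : ℕ) : ℝ≥0∞)
        = (((d-2:ℕ):ℝ≥0∞) + 1 + 1) + ((d * (x+1) : ℕ):ℝ≥0∞) from by exact_mod_cast nat_id1 hd x]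
    exact h2

include hd hn hy in
lemma tele_right : ∀ j : ℕ, y < n - j →
    uN d n y hy (n-j) = ((d * (j+1) : ℕ) : ℝ≥0∞) + uN d n y hy (n-j-1) := by
  intro j
  induction j with
  | zero =>
    intro hj
    have h := noden hd hn hy (by omega)
    have hc : ((d:ℕ):ℝ≥0∞) = ((d-1 : ℕ):ℝ≥0∞) + 1 := by
      exact_mod_cast (show d = d - 1 + 1 by omega)
    rw [hc, add_mul, one_mul, rearr] at h
    have h2 := cancel (ENNReal.mul_ne_top (ENNReal.natCast_ne_top _) (uN_fin hd hn hy n)) h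
    rw [show ((d * (0+1) : ℕ) : ℝ≥0∞) = ((d-1:ℕ):ℝ≥0∞) + 1 from by exact_mod_cast nat_id0 hd,
      show n - 0 = n from rfl]
    exact h2
  | succ j ih =>
    intro hj
    have h := nodei hd hn hy (n-(j+1)) (by omega) (by omega) (by omega)
    rw [show n - (j+1) + 1 = n - j by omega, ih (by omega),
      show n - j - 1 = n - (j+1) by omega] at h
    have hc : ((d:ℕ):ℝ≥0∞) = ((d-2 : ℕ):ℝ≥0∞) + 1 + 1 := by
      exact_mod_cast (show d = d - 2 + 1 + 1 by omega)
    rw [hc, add_mul, add_mul, one_mul] at h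
    rw [show (((d-2:ℕ):ℝ≥0∞) + 1 + 1)
          + (((d-2:ℕ):ℝ≥0∞) * uN d n y hy (n-(j+1)) + uN d n y hy (n-(j+1)-1)
            + (((d * (j+1) : ℕ):ℝ≥0∞) + uN d n y hy (n-(j+1))))
        = (((d-2:ℕ):ℝ≥0∞) * uN d n y hy (n-(j+1)) + uN d n y hy (n-(j+1)))
          + (((((d-2:ℕ):ℝ≥0∞) + 1 + 1) + ((d * (j+1) : ℕ):ℝ≥0∞)) + uN d n y hy (n-(j+1)-1))
        from by ring] at h
    have h2 := cancel (ENNReal.add_ne_top.mpr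
      ⟨ENNReal.mul_ne_top (ENNReal.natCast_ne_top _) (uN_fin hd hn hy (n-(j+1))),
        uN_fin hd hn hy (n-(j+1))⟩) h
    rw [show ((d * (j+1+1) : ℕ) : ℝ≥0∞)
        = (((d-2:ℕ):ℝ≥0∞) + 1 + 1) + ((d * (j+1) : ℕ):ℝ≥0∞) from by exact_mod_cast nat_id1 hd j]
    exact h2

end tele

/-! ### identification of the hitting time with the formula -/

section ident
variable {d n y : ℕ} (hd : 2 ≤ d) (hn : 1 ≤ n) (hy : y ≤ n)

include hd hn hy in
lemma aux_left : ∀ j : ℕ, j ≤ y → uN d n y hy (y-j) = ((Fv d n y (y-j) : ℕ) : ℝ≥0∞) := by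
  intro j
  induction j with
  | zero =>
    intro _
    rw [show y - 0 = y from rfl, uN_y hy, Fv_self]
    simp
  | succ j ih =>
    intro hj
    have ht := tele_left hd hn hy (y-(j+1)) (by omega)
    rw [show y - (j+1) + 1 = y - j by omega] at ht
    rw [ht, ih (by omega)]
    rw [show Fv d n y (y-(j+1)) = d * (y - j) + Fv d n y (y-j) from by
      have := Fv_lt (d := d) (n := n) (show y - (j+1) < y by omega)
      rwa [show y - (j+1) + 1 = y - j by omega] at this]
    push_cast
    ring

include hd hn hy in
lemma aux_right : ∀ j : ℕ, y + j ≤ n → uN d n y hy (y+j) = ((Fv d n y (y+j) : ℕ) : ℝ≥0∞) := by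
  intro j
  induction j with
  | zero =>
    intro _
    rw [show y + 0 = y from rfl, uN_y hy, Fv_self]
    simp
  | succ j ih =>
    intro hj
    have ht := tele_right hd hn hy (n-(y+j+1)) (by omega)
    rw [show n - (n-(y+j+1)) = y+j+1 by omega, show n - (y+j+1) + 1 = n - (y+j) by omega,
      show y + j + 1 - 1 = y + j from rfl] at ht
    rw [show y + (j+1) = y + j + 1 from rfl, ht, ih (by omega),
      show Fv d n y (y+j+1) = d * (n - (y+j)) + Fv d n y (y+j) from Fv_gt (by omega)]
    push_cast
    ring

include hd hn hy in
lemma u_eq (x : ℕ) (hx : x ≤ n) : uN d n y hy x = ((Fv d n y x : ℕ) : ℝ≥0∞) := by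
  rcases le_or_gt x y with h | h
  · have := aux_left hd hn hy (y - x) (by omega)
    rwa [show y - (y - x) = x by omega] at this
  · have := aux_right hd hn hy (x - y) (by omega)
    rwa [show y + (x - y) = x by omega] at this

end ident

/-! ### the maximum value -/

lemma Fv_le {d n y x : ℕ} (hx : x ≤ n) (hy : y ≤ n) : Fv d n y x ≤ Fv d n n 0 := by
  have hrefl : ∑ k ∈ Finset.range n, (n - k) = ∑ k ∈ Finset.range n, (k + 1) := by
    rw [← Finset.sum_range_reflect (fun k => n - k) n]
    refine Finset.sum_congr rfl fun k hk => ?_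
    have : k < n := Finset.mem_range.mp hk
    omega
  have hmax : Fv d n n 0 = d * ∑ k ∈ Finset.range n, (k+1) := by
    rw [Fv, if_pos (Nat.zero_le n), Nat.Ico_zero_eq_range]
  rw [Fv, hmax]
  split
  · refine Nat.mul_le_mul_left d (Finset.sum_le_sum_of_subset ?_)
    intro k hk
    simp only [Finset.mem_Ico, Finset.mem_range] at *
    omega
  · rw [← hrefl]
    refine Nat.mul_le_mul_left d (Finset.sum_le_sum_of_subset ?_)
    intro k hk
    simp only [Finset.mem_Ico, Finset.mem_range] at *
    omega

lemma Fv_gauss {d n : ℕ} : 2 * Fv d n n 0 = d * n * (n + 1) := by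
  have h1 : Fv d n n 0 = d * ∑ k ∈ Finset.range n, (k+1) := by
    rw [Fv, if_pos (Nat.zero_le n), Nat.Ico_zero_eq_range]
  have h2 : ∑ k ∈ Finset.range n, (k+1) = ∑ k ∈ Finset.range (n+1), k := by
    rw [Finset.sum_range_succ' (fun k => k) n, add_zero]
  have h3 := Finset.sum_range_id_mul_two (n+1)
  rw [h1, h2]
  calc 2 * (d * ∑ k ∈ Finset.range (n+1), k)
      = d * ((∑ k ∈ Finset.range (n+1), k) * 2) := by ring
    _ = d * ((n+1) * n) := by rw [h3, show n + 1 - 1 = n from rfl]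
    _ = d * n * (n+1) := by ring



/-- The maximal expected hitting time on `L(d,n)` equals `(d/2)·n·(n+1)`,
achieved at `x = 0`, `y = n`. -/
theorem Ldn_max_hitting_time (d n : ℕ) (hd : 2 ≤ d) (hn : 1 ≤ n) :
    (⨆ x : Fin (n + 1), ⨆ y : Fin (n + 1), hitExp (stepP (Ldn d n)) {y} x)
        = ((d * n * (n + 1) : ℕ) : ℝ≥0∞) / 2 ∧
      hitExp (stepP (Ldn d n)) {Fin.last n} 0
        = ((d * n * (n + 1) : ℕ) : ℝ≥0∞) / 2 := by
  have hval : ∀ (x yy : Fin (n+1)), hitExp (stepP (Ldn d n)) {yy} x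
      = ((Fv d n yy.val x.val : ℕ) : ℝ≥0∞) := by
    intro x yy
    have hyv : yy.val ≤ n := Nat.lt_succ_iff.mp yy.isLt
    have hxv : x.val ≤ n := Nat.lt_succ_iff.mp x.isLt
    have h := u_eq hd hn hyv x.val hxv
    rw [uN, dif_pos hxv] at h
    exact h
  have hFcast : ((Fv d n n 0 : ℕ) : ℝ≥0∞) = ((d * n * (n + 1) : ℕ) : ℝ≥0∞) / 2 := by
    rw [ENNReal.eq_div_iff (by norm_num) (by norm_num)]
    exact_mod_cast (Fv_gauss (d := d) (n := n))
  have hlast : hitExp (stepP (Ldn d n)) {Fin.last n} (0 : Fin (n+1))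
      = ((d * n * (n + 1) : ℕ) : ℝ≥0∞) / 2 := by
    rw [hval 0 (Fin.last n)]
    simp only [Fin.val_last, Fin.val_zero]
    exact hFcast
  refine ⟨le_antisymm ?_ ?_, hlast⟩
  · refine iSup_le fun x => iSup_le fun yy => ?_
    rw [hval x yy, ← hFcast]
    exact_mod_cast Fv_le (Nat.lt_succ_iff.mp x.isLt) (Nat.lt_succ_iff.mp yy.isLt)
  · rw [← hlast]
    exact le_iSup_of_le 0 (le_iSup_of_le (Fin.last n) le_rfl)
end

section
/- Let σ be the permutation of {−n,…,n} transposing k and k+1 for some k with 0 < k and k ≠ n−1, n, and let X^σ be the permuted walk on {−n,…,n} (from interior j jump to σ(j+1) or σ(j−1) equally likely, from ±n jump to σ(±n) or σ(±n∓1) equally likely). Then the expected first hitting time of {−n,n} from 0 equals n·(2n−3−2k)/(n−1) + n·(n−2), which is strictly less than n². -/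
open scoped ENNReal Classical

/-- Transition kernel of the permuted walk on `{−n,…,n}` where `σ` is the
transposition of `k` and `k+1`: from an interior `j` it jumps to `σ(j+1)` or
`σ(j−1)` equally likely (the kernel at `±n` is irrelevant since the walk is
stopped there). -/
noncomputable def swapP (n k : ℕ) (j l : ℤ) : ℝ≥0∞ :=
  if |j| < (n : ℤ) then
    (if l = Equiv.swap (k : ℤ) ((k : ℤ) + 1) (j + 1) then 1 / 2 else 0)
    + (if l = Equiv.swap (k : ℤ) ((k : ℤ) + 1) (j - 1) then 1 / 2 else 0)
  else 0

noncomputable def Wfun (n k : ℕ) (j : ℤ) : ℝ :=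
  if j ≤ (k : ℤ) - 1 then -((j : ℝ) + n)
  else if j = (k : ℤ) then -(k : ℝ)
  else if j = (k : ℤ) + 1 then -((k : ℝ) + 1)
  else ((n : ℝ) - j)

noncomputable def Hfun (n k : ℕ) (j : ℤ) : ℝ :=
  if |j| ≤ (n : ℤ) then
    ((n : ℝ) ^ 2 - (j : ℝ) ^ 2) + (2 * (k : ℝ) + 1) * Wfun n k j / ((n : ℝ) - 1)
  else 1

section RealPart
variable {n k : ℕ}

lemma HL (hk : k + 2 ≤ n) {j : ℤ} (hj1 : -(n:ℤ) ≤ j) (hj2 : j ≤ (k:ℤ) - 1) :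
    Hfun n k j = ((n : ℝ) ^ 2 - (j : ℝ) ^ 2)
      - (2 * (k : ℝ) + 1) * ((j : ℝ) + n) / ((n : ℝ) - 1) := by
  have hkn : (k:ℤ) + 2 ≤ n := by exact_mod_cast hk
  rw [Hfun, if_pos (by rw [abs_le]; omega), Wfun, if_pos hj2]; ring

lemma Hk (hk : k + 2 ≤ n) : Hfun n k k = ((n : ℝ) ^ 2 - (k : ℝ) ^ 2)
    - (2 * (k : ℝ) + 1) * (k : ℝ) / ((n : ℝ) - 1) := by
  have hkn : (k:ℤ) + 2 ≤ n := by exact_mod_cast hk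
  rw [Hfun, if_pos (by rw [abs_le]; omega), Wfun, if_neg (by omega), if_pos rfl]
  push_cast; ring

lemma Hk1 (hk : k + 2 ≤ n) : Hfun n k ((k:ℤ)+1) = ((n : ℝ) ^ 2 - ((k : ℝ)+1) ^ 2)
    - (2 * (k : ℝ) + 1) * ((k : ℝ)+1) / ((n : ℝ) - 1) := by
  have hkn : (k:ℤ) + 2 ≤ n := by exact_mod_cast hk
  rw [Hfun, if_pos (by rw [abs_le]; omega), Wfun, if_neg (by omega), if_neg (by omega),
    if_pos rfl]
  push_cast; ring

lemma HR (hk : k + 2 ≤ n) {j : ℤ} (hj1 : (k:ℤ) + 2 ≤ j) (hj2 : j ≤ (n:ℤ)) :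
    Hfun n k j = ((n : ℝ) ^ 2 - (j : ℝ) ^ 2)
      + (2 * (k : ℝ) + 1) * ((n : ℝ) - (j : ℝ)) / ((n : ℝ) - 1) := by
  have hkn : (k:ℤ) + 2 ≤ n := by exact_mod_cast hk
  rw [Hfun, if_pos (by rw [abs_le]; omega), Wfun, if_neg (by omega), if_neg (by omega),
    if_neg (by omega)]

lemma Hout {j : ℤ} (hj : (n:ℤ) < |j|) : Hfun n k j = 1 := by
  rw [Hfun, if_neg (by omega)]

lemma Hbdry_pos (hk : k + 2 ≤ n) : Hfun n k (n:ℤ) = 0 := by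
  rw [HR hk (by exact_mod_cast hk) le_rfl]; push_cast; ring

lemma Hbdry_neg (hk0 : 0 < k) (hk : k + 2 ≤ n) : Hfun n k (-(n:ℤ)) = 0 := by
  have hkn : (k:ℤ) + 2 ≤ n := by exact_mod_cast hk
  have hk0' : 1 ≤ (k:ℤ) := by exact_mod_cast hk0
  rw [HL hk le_rfl (by omega)]; push_cast; ring

lemma H_nonneg (hk0 : 0 < k) (hk : k + 2 ≤ n) (j : ℤ) : 0 ≤ Hfun n k j := by
  have hkn : (k:ℤ) + 2 ≤ n := by exact_mod_cast hk
  have hk0' : 1 ≤ (k:ℤ) := by exact_mod_cast hk0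
  have hkr : (k:ℝ) + 2 ≤ n := by exact_mod_cast hk
  have hk0r : 1 ≤ (k:ℝ) := by exact_mod_cast hk0
  have hn1 : (0:ℝ) < (n:ℝ) - 1 := by linarith
  by_cases h1 : |j| ≤ (n:ℤ)
  · have hja : -(n:ℝ) ≤ (j:ℝ) := by exact_mod_cast (abs_le.mp h1).1
    have hjb : (j:ℝ) ≤ (n:ℝ) := by exact_mod_cast (abs_le.mp h1).2
    rcases le_or_gt j ((k:ℤ)-1) with hc | hc
    · rw [HL hk (abs_le.mp h1).1 hc]
      have hcr : (j:ℝ) ≤ (k:ℝ) - 1 := by exact_mod_cast hc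
      rw [sub_nonneg, div_le_iff₀ hn1]
      have h3 : (3:ℝ) ≤ (n:ℝ) - j := by linarith
      have h4 : (k:ℝ) + 1 ≤ (n:ℝ) - 1 := by linarith
      have h5 : 3 * ((k:ℝ)+1) ≤ ((n:ℝ) - j) * ((n:ℝ) - 1) :=
        mul_le_mul h3 h4 (by linarith) (by linarith)
      have h6 : (0:ℝ) ≤ (j:ℝ) + n := by linarith
      nlinarith [mul_nonneg h6 (show (0:ℝ) ≤ ((n:ℝ) - j) * ((n:ℝ) - 1) - (2*(k:ℝ)+1) by linarith)]
    · rcases eq_or_lt_of_le (show (k:ℤ) ≤ j by omega) with hc2 | hc2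
      · rw [← hc2, Hk hk, sub_nonneg, div_le_iff₀ hn1]
        have a1 : 4*(k:ℝ)+4 ≤ (n:ℝ)^2 - (k:ℝ)^2 := by nlinarith
        have a2 : (k:ℝ)+1 ≤ (n:ℝ)-1 := by linarith
        nlinarith [mul_le_mul a1 a2 (by linarith) (by nlinarith)]
      · rcases eq_or_lt_of_le (show (k:ℤ)+1 ≤ j by omega) with hc3 | hc3
        · rw [← hc3, Hk1 hk, sub_nonneg, div_le_iff₀ hn1]
          have a1 : 2*(k:ℝ)+3 ≤ (n:ℝ)^2 - ((k:ℝ)+1)^2 := by nlinarith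
          have a2 : (k:ℝ)+1 ≤ (n:ℝ)-1 := by linarith
          nlinarith [mul_le_mul a1 a2 (by linarith) (by nlinarith)]
        · rw [HR hk (by omega) (abs_le.mp h1).2]
          have h2 : 0 ≤ (2 * (k : ℝ) + 1) * ((n : ℝ) - j) / ((n : ℝ) - 1) :=
            div_nonneg (mul_nonneg (by linarith) (by linarith)) (by linarith)
          nlinarith
  · rw [Hout (by omega)]; norm_num

lemma H_eq (hk0 : 0 < k) (hk : k + 2 ≤ n) {j : ℤ} (hj : |j| < (n:ℤ)) :
    Hfun n k j = 1 + (1/2) * Hfun n k (Equiv.swap (k:ℤ) ((k:ℤ)+1) (j+1))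
      + (1/2) * Hfun n k (Equiv.swap (k:ℤ) ((k:ℤ)+1) (j-1)) := by
  have hkn : (k:ℤ) + 2 ≤ n := by exact_mod_cast hk
  have hk0' : 1 ≤ (k:ℤ) := by exact_mod_cast hk0
  have hkr : (k:ℝ) + 2 ≤ n := by exact_mod_cast hk
  have hk0r : 1 ≤ (k:ℝ) := by exact_mod_cast hk0
  have hn1 : ((n:ℝ) - 1) ≠ 0 := by intro h; nlinarith
  rw [abs_lt] at hj
  by_cases h1 : j = (k:ℤ)
  · subst h1
    rw [Equiv.swap_apply_right,
      show Equiv.swap (k:ℤ) ((k:ℤ)+1) ((k:ℤ)-1) = (k:ℤ)-1 from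
        Equiv.swap_apply_of_ne_of_ne (by omega) (by omega),
      Hk hk, HL hk (by omega) (by omega)]
    push_cast
    field_simp
    ring
  · by_cases h2 : j = (k:ℤ)+1
    · subst h2
      rw [show (k:ℤ)+1+1 = (k:ℤ)+2 by ring,
        show Equiv.swap (k:ℤ) ((k:ℤ)+1) ((k:ℤ)+2) = (k:ℤ)+2 from
          Equiv.swap_apply_of_ne_of_ne (by omega) (by omega),
        show (k:ℤ)+1-1 = (k:ℤ) by ring, Equiv.swap_apply_left,
        Hk1 hk, HR hk (le_refl _) (by omega)]
      push_cast
      field_simp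
      ring
    · by_cases h3 : j = (k:ℤ)-1
      · subst h3
        rw [show (k:ℤ)-1+1 = (k:ℤ) by ring, Equiv.swap_apply_left,
          show Equiv.swap (k:ℤ) ((k:ℤ)+1) ((k:ℤ)-1-1) = (k:ℤ)-2 from by
            rw [show (k:ℤ)-1-1 = (k:ℤ)-2 by ring]
            exact Equiv.swap_apply_of_ne_of_ne (by omega) (by omega),
          HL hk (by omega) (by omega), Hk1 hk, HL hk (by omega) (by omega)]
        push_cast
        field_simp
        ring
      · by_cases h4 : j = (k:ℤ)+2
        · subst h4
          rw [show Equiv.swap (k:ℤ) ((k:ℤ)+1) ((k:ℤ)+2+1) = (k:ℤ)+3 from by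
              rw [show (k:ℤ)+2+1 = (k:ℤ)+3 by ring]
              exact Equiv.swap_apply_of_ne_of_ne (by omega) (by omega),
            show (k:ℤ)+2-1 = (k:ℤ)+1 by ring, Equiv.swap_apply_right,
            HR hk (le_refl _) (by omega), HR hk (by omega) (by omega), Hk hk]
          push_cast
          field_simp
          ring
        · have ha : Equiv.swap (k:ℤ) ((k:ℤ)+1) (j+1) = j+1 :=
            Equiv.swap_apply_of_ne_of_ne (by omega) (by omega)
          have hb : Equiv.swap (k:ℤ) ((k:ℤ)+1) (j-1) = j-1 :=
            Equiv.swap_apply_of_ne_of_ne (by omega) (by omega)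
          rw [ha, hb]
          rcases le_or_gt j ((k:ℤ)-2) with hc | hc
          · rw [HL hk (by omega) (by omega), HL hk (by omega) (by omega),
              HL hk (by omega) (by omega)]
            push_cast
            field_simp
            ring
          · have hc' : (k:ℤ)+3 ≤ j := by omega
            rw [HR hk (by omega) (by omega), HR hk (by omega) (by omega),
              HR hk (by omega) (by omega)]
            push_cast
            field_simp
            ring

lemma H_zero (hk0 : 0 < k) (hk : k + 2 ≤ n) :
    Hfun n k 0 = (n:ℝ)^2 - (2*(k:ℝ)+1) * n / ((n:ℝ)-1) := by
  have hkn : (k:ℤ) + 2 ≤ n := by exact_mod_cast hk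
  have hk0' : 1 ≤ (k:ℤ) := by exact_mod_cast hk0
  rw [HL hk (by omega) (by omega)]
  push_cast; ring

end RealPart

section ENN
variable {n k : ℕ}

local notation "σ" => Equiv.swap (k:ℤ) ((k:ℤ)+1)
local notation "Sset" => ({(n : ℤ), -(n : ℤ)} : Set ℤ)


lemma hitIter_succ_apply {V : Type*} (P : V → V → ℝ≥0∞) (S : Set V) (m : ℕ) (x : V) :
    hitIter P S (m+1) x = if x ∈ S then 0 else 1 + ∑' z, P x z * hitIter P S m z := rfl

lemma hitIter_succ_le {V : Type*} (P : V → V → ℝ≥0∞) (S : Set V) :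
    ∀ m, hitIter P S m ≤ hitIter P S (m+1) := by
  intro m
  induction m with
  | zero => intro x; exact zero_le
  | succ m ih =>
    intro x
    show hitIter P S (m+1) x ≤ hitIter P S (m+2) x
    rw [hitIter_succ_apply, hitIter_succ_apply]
    by_cases hx : x ∈ S
    · simp [hx]
    · simp only [if_neg hx]
      refine add_le_add_right (ENNReal.tsum_le_tsum fun z => ?_) 1
      exact mul_le_mul_right (ih z) _

lemma hitIter_mono_s16 {V : Type*} (P : V → V → ℝ≥0∞) (S : Set V) :
    Monotone (hitIter P S) :=
  monotone_nat_of_le_succ (hitIter_succ_le P S)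

lemma hitExp_mem_s16 {V : Type*} (P : V → V → ℝ≥0∞) (S : Set V) {x : V} (hx : x ∈ S) :
    hitExp P S x = 0 := by
  have : ∀ m, hitIter P S m x = 0 := by
    intro m; cases m with
    | zero => rfl
    | succ m => rw [hitIter_succ_apply, if_pos hx]
  simp [hitExp, this]

lemma swapP_tsum (hx : |x| < (n:ℤ)) (f : ℤ → ℝ≥0∞) :
    ∑' z, swapP n k x z * f z
      = (1/2) * f (σ (x+1)) + (1/2) * f (σ (x-1)) := by
  have hab : σ (x+1) ≠ σ (x-1) := (Equiv.injective _).ne (by omega)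
  rw [tsum_eq_sum (s := {σ (x+1), σ (x-1)}) ?_]
  · rw [Finset.sum_pair hab]
    simp [swapP, if_pos hx, hab, hab.symm]
  · intro z hz
    simp only [Finset.mem_insert, Finset.mem_singleton, not_or] at hz
    simp [swapP, if_pos hx, hz.1, hz.2]

lemma not_mem_Sset (hx : |x| < (n:ℤ)) : x ∉ Sset := by
  simp only [Set.mem_insert_iff, Set.mem_singleton_iff]
  rw [abs_lt] at hx; push_neg; omega

lemma ofReal_comb {A B : ℝ} (hA : 0 ≤ A) (hB : 0 ≤ B) :
    ENNReal.ofReal (1 + 1/2*A + 1/2*B)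
      = 1 + (1/2) * ENNReal.ofReal A + (1/2) * ENNReal.ofReal B := by
  have h12 : ((1:ℝ≥0∞)/2) = ENNReal.ofReal (1/2) := by
    rw [ENNReal.ofReal_div_of_pos (by norm_num), ENNReal.ofReal_one, ENNReal.ofReal_ofNat]
  rw [h12, ← ENNReal.ofReal_mul (by norm_num), ← ENNReal.ofReal_mul (by norm_num),
    ← ENNReal.ofReal_one, ← ENNReal.ofReal_add (by norm_num) (by positivity),
    ← ENNReal.ofReal_add (by positivity) (by positivity)]

lemma hitIter_le_H (hk0 : 0 < k) (hk : k + 2 ≤ n) :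
    ∀ m x, hitIter (swapP n k) Sset m x ≤ ENNReal.ofReal (Hfun n k x) := by
  intro m
  induction m with
  | zero => intro x; exact zero_le
  | succ m ih =>
    intro x
    rw [hitIter_succ_apply]
    by_cases hxS : x ∈ Sset
    · simp [hxS]
    · rw [if_neg hxS]
      by_cases hx : |x| < (n:ℤ)
      · rw [swapP_tsum hx, H_eq hk0 hk hx,
          ofReal_comb (H_nonneg hk0 hk _) (H_nonneg hk0 hk _), add_assoc]
        refine add_le_add_right (add_le_add ?_ ?_) 1 <;>
          exact mul_le_mul_right (ih _) _
      · have hHx : Hfun n k x = 1 := by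
          apply Hout
          simp only [Set.mem_insert_iff, Set.mem_singleton_iff] at hxS
          push_neg at hxS
          rcases abs_choice x with h | h <;> omega
        have : ∀ z, swapP n k x z * hitIter (swapP n k) Sset m z = 0 := by
          intro z; rw [swapP, if_neg hx, zero_mul]
        rw [tsum_eq_sum (s := ∅) (fun z _ => this z), Finset.sum_empty, add_zero, hHx]
        simp

lemma hitExp_le_H (hk0 : 0 < k) (hk : k + 2 ≤ n) (x : ℤ) :
    hitExp (swapP n k) Sset x ≤ ENNReal.ofReal (Hfun n k x) :=
  iSup_le fun m => hitIter_le_H hk0 hk m x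

lemma hitExp_ne_top (hk0 : 0 < k) (hk : k + 2 ≤ n) (x : ℤ) :
    hitExp (swapP n k) Sset x ≠ ⊤ :=
  ((hitExp_le_H hk0 hk x).trans_lt ENNReal.ofReal_lt_top).ne

lemma hitExp_interior (hx : |x| < (n:ℤ)) :
    hitExp (swapP n k) Sset x
      = 1 + (1/2) * hitExp (swapP n k) Sset (σ (x+1))
          + (1/2) * hitExp (swapP n k) Sset (σ (x-1)) := by
  have hxS : x ∉ Sset := not_mem_Sset hx
  have monoa : Monotone fun m => (1:ℝ≥0∞)/2 * hitIter (swapP n k) Sset m (σ (x+1)) :=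
    fun i j hij => mul_le_mul_right (hitIter_mono_s16 _ _ hij _) _
  have monob : Monotone fun m => (1:ℝ≥0∞)/2 * hitIter (swapP n k) Sset m (σ (x-1)) :=
    fun i j hij => mul_le_mul_right (hitIter_mono_s16 _ _ hij _) _
  calc hitExp (swapP n k) Sset x
      = ⨆ m, hitIter (swapP n k) Sset (m+1) x := by
        refine le_antisymm (iSup_le fun m => ?_) (iSup_le fun m => ?_)
        · exact (hitIter_succ_le _ _ m x).trans (le_iSup (fun m => hitIter (swapP n k) Sset (m+1) x) m)
        · exact le_iSup (fun m => hitIter (swapP n k) Sset m x) (m+1)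
    _ = ⨆ m, (1 + ((1/2) * hitIter (swapP n k) Sset m (σ (x+1))
          + (1/2) * hitIter (swapP n k) Sset m (σ (x-1)))) := by
        refine iSup_congr fun m => ?_
        rw [hitIter_succ_apply, if_neg hxS, swapP_tsum hx]
    _ = 1 + ⨆ m, ((1/2) * hitIter (swapP n k) Sset m (σ (x+1))
          + (1/2) * hitIter (swapP n k) Sset m (σ (x-1))) := (ENNReal.add_iSup _).symm
    _ = 1 + ((⨆ m, (1/2) * hitIter (swapP n k) Sset m (σ (x+1)))
          + (⨆ m, (1/2) * hitIter (swapP n k) Sset m (σ (x-1)))) := by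
        rw [ENNReal.iSup_add_iSup_of_monotone monoa monob]
    _ = 1 + (1/2) * hitExp (swapP n k) Sset (σ (x+1))
          + (1/2) * hitExp (swapP n k) Sset (σ (x-1)) := by
        rw [hitExp, hitExp, ← ENNReal.mul_iSup, ← ENNReal.mul_iSup, add_assoc]

lemma sigma_range (hk0 : 0 < k) (hk : k + 2 ≤ n) {y : ℤ}
    (h1 : -(n:ℤ) ≤ y) (h2 : y ≤ (n:ℤ)) : -(n:ℤ) ≤ σ y ∧ σ y ≤ (n:ℤ) := by
  have hkn : (k:ℤ) + 2 ≤ n := by exact_mod_cast hk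
  have hk0' : 1 ≤ (k:ℤ) := by exact_mod_cast hk0
  by_cases hy1 : y = (k:ℤ)
  · rw [hy1, Equiv.swap_apply_left]; omega
  · by_cases hy2 : y = (k:ℤ)+1
    · rw [hy2, Equiv.swap_apply_right]; omega
    · rw [Equiv.swap_apply_of_ne_of_ne hy1 hy2]; omega

end ENN

noncomputable def phiFun (n k : ℕ) (y : ℤ) : ℝ :=
  (hitExp (swapP n k) ({(n : ℤ), -(n : ℤ)} : Set ℤ) y).toReal

noncomputable def Dfun (n k : ℕ) (j : ℤ) : ℝ := Hfun n k j - phiFun n k j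

section ENN2
variable {n k : ℕ}

local notation "σ" => Equiv.swap (k:ℤ) ((k:ℤ)+1)
local notation "Sset" => ({(n : ℤ), -(n : ℤ)} : Set ℤ)

lemma phi_interior (hk0 : 0 < k) (hk : k + 2 ≤ n) {x : ℤ} (hx : |x| < (n:ℤ)) :
    phiFun n k x = 1 + 1/2 * phiFun n k (σ (x+1)) + 1/2 * phiFun n k (σ (x-1)) := by
  have ha : (1/2 : ℝ≥0∞) * hitExp (swapP n k) Sset (σ (x+1)) ≠ ⊤ :=
    ENNReal.mul_ne_top (by norm_num) (hitExp_ne_top hk0 hk _)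
  have hb : (1/2 : ℝ≥0∞) * hitExp (swapP n k) Sset (σ (x-1)) ≠ ⊤ :=
    ENNReal.mul_ne_top (by norm_num) (hitExp_ne_top hk0 hk _)
  rw [phiFun, phiFun, phiFun, hitExp_interior hx,
    ENNReal.toReal_add (ENNReal.add_ne_top.mpr ⟨ENNReal.one_ne_top, ha⟩) hb,
    ENNReal.toReal_add ENNReal.one_ne_top ha,
    ENNReal.toReal_mul, ENNReal.toReal_mul, ENNReal.toReal_one]
  norm_num

lemma phi_le_H (hk0 : 0 < k) (hk : k + 2 ≤ n) (y : ℤ) : phiFun n k y ≤ Hfun n k y :=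
  ENNReal.toReal_le_of_le_ofReal (H_nonneg hk0 hk y) (hitExp_le_H hk0 hk y)

lemma D_nonneg (hk0 : 0 < k) (hk : k + 2 ≤ n) (y : ℤ) : 0 ≤ Dfun n k y :=
  sub_nonneg.mpr (phi_le_H hk0 hk y)

lemma phi_bdry_pos : phiFun n k (n:ℤ) = 0 := by
  rw [phiFun, hitExp_mem_s16 _ _ (by simp : (n:ℤ) ∈ Sset)]; rfl

lemma phi_bdry_neg : phiFun n k (-(n:ℤ)) = 0 := by
  rw [phiFun, hitExp_mem_s16 _ _ (by simp : (-(n:ℤ)) ∈ Sset)]; rfl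

lemma D_bdry_pos (hk : k + 2 ≤ n) : Dfun n k (n:ℤ) = 0 := by
  rw [Dfun, phi_bdry_pos, Hbdry_pos hk]; ring

lemma D_bdry_neg (hk0 : 0 < k) (hk : k + 2 ≤ n) : Dfun n k (-(n:ℤ)) = 0 := by
  rw [Dfun, phi_bdry_neg, Hbdry_neg hk0 hk]; ring

lemma D_rel (hk0 : 0 < k) (hk : k + 2 ≤ n) {x : ℤ} (hx : |x| < (n:ℤ)) :
    Dfun n k x = 1/2 * Dfun n k (σ (x+1)) + 1/2 * Dfun n k (σ (x-1)) := by
  rw [Dfun, Dfun, Dfun, H_eq hk0 hk hx, phi_interior hk0 hk hx]; ring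
end ENN2

/-- Transposing `k` and `k+1` (with `0 < k ≤ n−2`) gives expected exit time
`n·(2n−3−2k)/(n−1) + n·(n−2)` from `{−n,n}`, strictly less than `n²`. -/
theorem swap_exit_time (n k : ℕ) (hk0 : 0 < k) (hk : k + 2 ≤ n) :
    hitExp (swapP n k) ({(n : ℤ), -(n : ℤ)} : Set ℤ) 0
        = ((n * (2 * n - 3 - 2 * k) : ℕ) : ℝ≥0∞) / ((n - 1 : ℕ) : ℝ≥0∞)
          + ((n * (n - 2) : ℕ) : ℝ≥0∞) ∧
      hitExp (swapP n k) ({(n : ℤ), -(n : ℤ)} : Set ℤ) 0 < ((n ^ 2 : ℕ) : ℝ≥0∞) := by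
  have hkn : (k:ℤ) + 2 ≤ n := by exact_mod_cast hk
  have hk0' : 1 ≤ (k:ℤ) := by exact_mod_cast hk0
  have hnR : (3:ℝ) ≤ (n:ℝ) := by exact_mod_cast (show 3 ≤ n by omega)
  have hkR : (k:ℝ) + 2 ≤ (n:ℝ) := by exact_mod_cast hk
  have hTne : (Finset.Icc (-(n:ℤ)) (n:ℤ)).Nonempty := ⟨0, by rw [Finset.mem_Icc]; omega⟩
  set M := (Finset.Icc (-(n:ℤ)) (n:ℤ)).sup' hTne (Dfun n k) with hMdef
  have hprop : ∀ x : ℤ, |x| < (n:ℤ) → Dfun n k x = M →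
      Dfun n k (Equiv.swap (k:ℤ) ((k:ℤ)+1) (x+1)) = M
        ∧ Dfun n k (Equiv.swap (k:ℤ) ((k:ℤ)+1) (x-1)) = M := by
    intro x hx hDx
    have hxl := abs_lt.mp hx
    have ha := sigma_range hk0 hk (show -(n:ℤ) ≤ x+1 by omega) (show x+1 ≤ n by omega)
    have hb := sigma_range hk0 hk (show -(n:ℤ) ≤ x-1 by omega) (show x-1 ≤ n by omega)
    have hDa : Dfun n k (Equiv.swap (k:ℤ) ((k:ℤ)+1) (x+1)) ≤ M :=
      Finset.le_sup' (Dfun n k) (Finset.mem_Icc.mpr ⟨ha.1, ha.2⟩)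
    have hDb : Dfun n k (Equiv.swap (k:ℤ) ((k:ℤ)+1) (x-1)) ≤ M :=
      Finset.le_sup' (Dfun n k) (Finset.mem_Icc.mpr ⟨hb.1, hb.2⟩)
    have hrel := D_rel hk0 hk hx
    constructor <;> linarith
  have hreach : ∀ (m : ℕ), ∀ j : ℤ, -(n:ℤ) ≤ j → j ≤ n → (n:ℤ) - j ≤ (m:ℤ) →
      Dfun n k j = M → M = 0 := by
    intro m
    induction m with
    | zero =>
      intro j h1 h2 h3 h4
      have : j = (n:ℤ) := by push_cast at h3; omega
      rw [this, D_bdry_pos hk] at h4; exact h4.symm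
    | succ m ih =>
      intro j h1 h2 h3 h4
      by_cases hjn : j = (n:ℤ)
      · rw [hjn, D_bdry_pos hk] at h4; exact h4.symm
      by_cases hjnn : j = -(n:ℤ)
      · rw [hjnn, D_bdry_neg hk0 hk] at h4; exact h4.symm
      have hx : |j| < (n:ℤ) := by rw [abs_lt]; omega
      by_cases hjk : j = (k:ℤ)
      · subst hjk
        have h5 := (hprop _ hx h4).2
        rw [show Equiv.swap (k:ℤ) ((k:ℤ)+1) ((k:ℤ)-1) = (k:ℤ)-1 from
          Equiv.swap_apply_of_ne_of_ne (by omega) (by omega)] at h5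
        have hx2 : |(k:ℤ)-1| < (n:ℤ) := by rw [abs_lt]; omega
        have h6 := (hprop ((k:ℤ)-1) hx2 h5).1
        rw [show (k:ℤ)-1+1 = (k:ℤ) by ring, Equiv.swap_apply_left] at h6
        exact ih ((k:ℤ)+1) (by omega) (by omega) (by push_cast at h3 ⊢; omega) h6
      · have h5 := (hprop _ hx h4).1
        by_cases hj1 : j + 1 = (k:ℤ)
        · rw [hj1, Equiv.swap_apply_left] at h5
          exact ih ((k:ℤ)+1) (by omega) (by omega) (by push_cast at h3 ⊢; omega) h5
        · rw [Equiv.swap_apply_of_ne_of_ne hj1 (by omega)] at h5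
          exact ih (j+1) (by omega) (by omega) (by push_cast at h3 ⊢; omega) h5
  obtain ⟨j0, hj0T, hj0⟩ := Finset.exists_mem_eq_sup' hTne (Dfun n k)
  have hj0' := Finset.mem_Icc.mp hj0T
  have hM0 : M = 0 :=
    hreach ((n:ℤ) - j0).toNat j0 hj0'.1 hj0'.2 (by omega) hj0.symm
  have h0T : (0:ℤ) ∈ Finset.Icc (-(n:ℤ)) (n:ℤ) := by rw [Finset.mem_Icc]; omega
  have hD0 : Dfun n k 0 = 0 :=
    le_antisymm ((Finset.le_sup' (Dfun n k) h0T).trans_eq hM0) (D_nonneg hk0 hk 0)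
  have hφ0 : phiFun n k 0 = Hfun n k 0 := by
    have h := hD0; rw [Dfun] at h; linarith
  have hF0 : hitExp (swapP n k) ({(n : ℤ), -(n : ℤ)} : Set ℤ) 0
      = ENNReal.ofReal (Hfun n k 0) := by
    rw [← hφ0, phiFun]
    exact (ENNReal.ofReal_toReal (hitExp_ne_top hk0 hk 0)).symm
  have hn1 : ((n:ℝ) - 1) ≠ 0 := by linarith
  have e1 : ((2*n-3-2*k : ℕ):ℝ) = 2*(n:ℝ) - 3 - 2*(k:ℝ) := by
    have h1 : 2*k ≤ 2*n-3 := by omega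
    have h2 : 3 ≤ 2*n := by omega
    rw [Nat.cast_sub h1, Nat.cast_sub h2]; push_cast; ring
  have e2 : ((n-1 : ℕ):ℝ) = (n:ℝ) - 1 := by
    rw [Nat.cast_sub (by omega)]; push_cast; ring
  have e3 : ((n-2 : ℕ):ℝ) = (n:ℝ) - 2 := by
    rw [Nat.cast_sub (by omega)]; push_cast; ring
  have hBpos : (0:ℝ) < ((n-1:ℕ):ℝ) := by rw [e2]; linarith
  have key : ENNReal.ofReal (((n*(2*n-3-2*k):ℕ):ℝ)/((n-1:ℕ):ℝ) + ((n*(n-2):ℕ):ℝ))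
      = ((n*(2*n-3-2*k):ℕ):ℝ≥0∞)/((n-1:ℕ):ℝ≥0∞) + ((n*(n-2):ℕ):ℝ≥0∞) := by
    rw [ENNReal.ofReal_add (div_nonneg (Nat.cast_nonneg _) hBpos.le) (Nat.cast_nonneg _),
      ENNReal.ofReal_div_of_pos hBpos, ENNReal.ofReal_natCast, ENNReal.ofReal_natCast,
      ENNReal.ofReal_natCast]
  constructor
  · rw [hF0, ← key]
    congr 1
    rw [H_zero hk0 hk, Nat.cast_mul, Nat.cast_mul, e1, e2, e3]
    field_simp
    ring
  · rw [hF0, ← ENNReal.ofReal_natCast (n^2),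
      ENNReal.ofReal_lt_ofReal_iff (by push_cast; nlinarith)]
    rw [H_zero hk0 hk]
    push_cast
    have hpos : 0 < (2*(k:ℝ)+1) * n / ((n:ℝ)-1) := by
      apply div_pos (by nlinarith) (by linarith)
    linarith
end
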